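/- Let δ be a Young diagram of height < r and width ≤ d − r + 1 (0 < r ≤ d), with staircase sequence δ_0, δ_1, … and box counts s_k = |δ_k| − |δ|. For each i ≥ 0 such that the weight α(i) = (δ^1, …, δ^{r−1}, i) is regular, let l(i) be the length of the unique Weyl group element w(i) making w(i) • α(i) dominant. Then w(i) • α(i) = δ_{i − l(i)} and s_{i − l(i)} = i; in particular, for each k the equation k = i − l(i) over regular indices i has at most one solution. -/

import Mathlib

/-- `ρ = (r, r-1, …, 1)` as a function on `Fin r` (0-indexed). -/
def rho (r : ℕ) (i : Fin r) : ℤ := (r : ℤ) - (i : ℤ)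

/-- The dot (ρ-shifted) action `w • α = w(α + ρ) - ρ` of the Weyl group `S_r` on
integer weights of `GL_r` (the symmetric group permutes coordinates). -/
def dotAct {r : ℕ} (w : Equiv.Perm (Fin r)) (a : Fin r → ℤ) : Fin r → ℤ :=
  fun i => a (w.symm i) + rho r (w.symm i) - rho r i

/-- The weight `α(i) = (δ^1, …, δ^{r-1}, i)`, where the partition `δ` is given by
its 0-indexed row lengths `f` (so `δ^j = f (j-1)`). -/
def alphaWt (r : ℕ) (f : ℕ → ℕ) (i : ℕ) : Fin r → ℤ :=
  fun j => if (j : ℕ) < r - 1 then (f j : ℤ) else (i : ℤ)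

/-- A weight is dominant if its entries are non-increasing. -/
def Dominant {r : ℕ} (a : Fin r → ℤ) : Prop := ∀ j k : Fin r, j ≤ k → a k ≤ a j

/-- The Coxeter length of a permutation: its number of inversions. -/
def inversions {r : ℕ} (w : Equiv.Perm (Fin r)) : ℕ :=
  (Finset.univ.filter fun p : Fin r × Fin r => p.1 < p.2 ∧ w p.2 < w p.1).card

/-- A weight is regular for the dot action iff `α + ρ` has pairwise distinct
entries. -/
def RegularWt {r : ℕ} (a : Fin r → ℤ) : Prop :=
  Function.Injective fun j => a j + rho r j

/-- `colHt f j` : height of the `j`-th column (`j ≥ 1`) of the Young diagram with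
0-indexed row lengths `f`, i.e. the number of rows of length at least `j`. -/
noncomputable def colHt (f : ℕ → ℕ) (j : ℕ) : ℕ := sInf {i | f i < j}

/-- Add boxes to column `k` so that rows `0,…,t-1` reach length at least `k`,
i.e. the `k`-th column reaches height `t`. -/
def addCol (f : ℕ → ℕ) (k t : ℕ) : ℕ → ℕ :=
  fun i => if i < t then max (f i) k else f i

/-- The staircase algorithm with parameter `r` applied to a Young diagram `f` of
height `< r`: stage 1 adds boxes to the first column until it reaches height `r`;
stage `k ≥ 2` adds boxes to the `k`-th column until its height is one more than the
height of the `(k-1)`-th column of the starting diagram. `staircase r f k` is `δ_k`. -/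
noncomputable def staircase (r : ℕ) (f : ℕ → ℕ) : ℕ → ℕ → ℕ
  | 0 => f
  | k + 1 => addCol (staircase r f k) (k + 1) (if k = 0 then r else colHt f k + 1)

/-! Adding `ρ` turns `α(i)` into the strictly decreasing sequence `f j + r - j` (`j < r - 1`)
followed by `i + 1`, which by regularity differs from all of them. Making `w • α(i)` dominant
means sorting `α(i) + ρ` decreasingly, i.e. inserting `i + 1` at the position `p` where it fits;
this creates exactly `r - 1 - p` inversions, so `l(i) = r - 1 - p`. Subtracting `ρ` from the sorted
sequence gives `f j` before `p`, `i - l(i)` at `p` and `f (j - 1) + 1` after `p`, which is the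
closed form of the staircase diagram `δ_{i - l(i)}`. The dot action preserves the total number of
boxes, so `s_{i - l(i)} = |α(i)| - |δ| = i`, and this determines `i` from `i - l(i)`. -/

open Finset

theorem StrictAnti.eq_of_range_subset {α β : Type*} [LinearOrder α] [Finite α] [LinearOrder β]
    {f g : α → β} (hf : StrictAnti f) (hg : StrictAnti g) (h : Set.range f ⊆ Set.range g) :
    f = g := by
  choose σ hσ using fun x => h (Set.mem_range_self x)
  have hσ_mono : StrictMono σ := fun x y hxy => by
    have := hf hxy
    rwa [← hσ x, ← hσ y, hg.lt_iff_gt] at this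
  funext x
  rw [← hσ x, hσ_mono.apply_eq]

theorem Nat.exists_forall_lt_iff_le {P : ℕ → Prop} (hP : ∀ j j', j ≤ j' → P j → P j') (n : ℕ) :
    ∃ p ≤ n, ∀ j < n, P j ↔ p ≤ j := by
  classical
  have hex : ∃ j, j = n ∨ P j := ⟨n, Or.inl rfl⟩
  refine ⟨Nat.find hex, Nat.find_min' hex (Or.inl rfl), fun j hj => ⟨fun h => ?_, fun h => ?_⟩⟩
  · exact Nat.find_min' hex (Or.inr h)
  · rcases Nat.find_spec hex with hn | hp
    · omega
    · exact hP _ _ h hp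

theorem rho_strictAnti (r : ℕ) : StrictAnti (rho r) := fun j k hjk => by
  simp only [rho]
  exact sub_lt_sub_left (by exact_mod_cast hjk) _

theorem dotAct_add_rho {r : ℕ} (w : Equiv.Perm (Fin r)) (a : Fin r → ℤ) (j : Fin r) :
    dotAct w a j + rho r j = a (w.symm j) + rho r (w.symm j) := by
  simp only [dotAct]; ring

theorem Dominant.strictAnti_add_rho {r : ℕ} {w : Equiv.Perm (Fin r)} {a : Fin r → ℤ}
    (h : Dominant (dotAct w a)) : StrictAnti fun j => a (w.symm j) + rho r (w.symm j) := by
  simpa only [dotAct_add_rho] using Antitone.add_strictAnti (fun j k hjk => h j k hjk)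
    (rho_strictAnti r)

theorem sum_dotAct {r : ℕ} (w : Equiv.Perm (Fin r)) (a : Fin r → ℤ) :
    ∑ j, dotAct w a j = ∑ j, a j := by
  simp only [dotAct, sum_sub_distrib, sum_add_distrib, Equiv.sum_comp w.symm (fun j => a j),
    Equiv.sum_comp w.symm (fun j => rho r j)]
  ring

theorem inversions_eq_card_of_strictAnti {r : ℕ} {w : Equiv.Perm (Fin r)} {b : Fin r → ℤ}
    (hw : StrictAnti fun j => b (w.symm j)) :
    inversions w = #{q : Fin r × Fin r | q.1 < q.2 ∧ b q.1 < b q.2} := by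
  unfold inversions
  congr 1
  refine filter_congr fun q _ => and_congr_right fun _ => ?_
  simpa using (hw.lt_iff_gt (a := w q.1) (b := w q.2)).symm

theorem card_ascents_of_insert {n p : ℕ} {b : Fin (n + 1) → ℤ}
    (hb : ∀ s t : Fin (n + 1), s < t → (t : ℕ) < n → b t < b s)
    (hp : ∀ s : Fin (n + 1), (s : ℕ) < n → (b s < b (Fin.last n) ↔ p ≤ s)) (hpn : p ≤ n) :
    #{q : Fin (n + 1) × Fin (n + 1) | q.1 < q.2 ∧ b q.1 < b q.2} = n - p := by
  have hpairs : filter (fun q : Fin (n + 1) × Fin (n + 1) => q.1 < q.2 ∧ b q.1 < b q.2) univ =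
      (univ.filter (fun s : Fin (n + 1) => (s : ℕ) < n) \ univ.filter fun s => (s : ℕ) < p) ×ˢ
        {Fin.last n} := by
    ext ⟨s, t⟩
    simp only [mem_filter, mem_univ, true_and, mem_product, mem_sdiff, mem_singleton, not_lt]
    constructor
    · rintro ⟨hst, hlt⟩
      obtain rfl : t = Fin.last n := by
        by_contra ht
        exact (hb s t hst (Fin.val_lt_last ht)).not_gt hlt
      have hs : (s : ℕ) < n := Fin.val_lt_last (Fin.lt_last_iff_ne_last.1 hst)
      exact ⟨⟨hs, (hp s hs).1 hlt⟩, rfl⟩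
    · rintro ⟨⟨hs, hps⟩, rfl⟩
      exact ⟨Fin.lt_def.2 (by simpa using hs), (hp s hs).2 hps⟩
  rw [hpairs, card_product, card_singleton, mul_one,
    card_sdiff_of_subset fun s => by simp only [mem_filter, mem_univ, true_and]; omega,
    Fin.card_filter_val_lt, Fin.card_filter_val_lt]
  omega

theorem Antitone.addCol {f : ℕ → ℕ} (hf : Antitone f) (k t : ℕ) : Antitone (addCol f k t) := by
  intro i j hij
  have := hf hij
  simp only [_root_.addCol]
  split_ifs <;> omega

theorem Antitone.staircase {f : ℕ → ℕ} (hf : Antitone f) (r k : ℕ) :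
    Antitone (staircase r f k) := by
  induction k with
  | zero => exact hf
  | succ k ih => exact ih.addCol _ _

theorem lt_colHt_iff {f : ℕ → ℕ} (hf : Antitone f) {k : ℕ} (hk : ∃ i, f i < k) (j : ℕ) :
    j < colHt f k ↔ k ≤ f j := by
  constructor
  · intro h
    simpa using Nat.notMem_of_lt_sInf (s := {i | f i < k}) h
  · intro h
    by_contra hj
    exact (h.trans (hf (not_lt.1 hj))).not_gt (Nat.sInf_mem hk)

theorem staircase_apply {n : ℕ} {f : ℕ → ℕ} (hf : Antitone f) (hfn : f n = 0) (k j : ℕ)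
    (hj : j ≤ n) :
    staircase (n + 1) f k j = max (f j) (if j = 0 then k else min k (f (j - 1) + 1)) := by
  induction k with
  | zero => simp [staircase]
  | succ k ih =>
    simp only [staircase, addCol, ih]
    rcases Nat.eq_zero_or_pos k with rfl | hk
    · simp only [if_true]
      split_ifs <;> omega
    · have hcol := lt_colHt_iff hf (k := k) ⟨n, by omega⟩ (j - 1)
      have hcoln := (lt_colHt_iff hf (k := k) ⟨n, by omega⟩ n).not.2 (by omega)
      rw [if_neg hk.ne']
      split_ifs <;> omega

/-- `δ_k + ρ` is `α(k + n - p) + ρ` with its last entry moved to position `p`. -/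
theorem exists_staircase_add_rho_eq {n : ℕ} {f : ℕ → ℕ} (hf : Antitone f) (hfn : f n = 0)
    {p k : ℕ} (hpn : p ≤ n) (hkf : ∀ j < p, k ≤ f j) (hfk : ∀ j, p ≤ j → j < n → f j + 1 ≤ k)
    (t : Fin (n + 1)) :
    ∃ s : Fin (n + 1), alphaWt (n + 1) f (k + n - p) t + rho (n + 1) t =
      staircase (n + 1) f k s + rho (n + 1) s := by
  have hst := staircase_apply hf hfn k
  simp only [alphaWt, rho, Nat.add_sub_cancel, Nat.cast_sub (show p ≤ k + n by omega)]
  push_cast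
  by_cases ht : (t : ℕ) < n
  · rw [if_pos ht]
    by_cases htp : (t : ℕ) < p
    · refine ⟨t, ?_⟩
      have := hkf t htp
      rw [hst _ t.is_le]
      split_ifs <;> omega
    · refine ⟨⟨t + 1, by omega⟩, ?_⟩
      have := hfk t (by omega) ht
      have := hf (Nat.le_add_right t 1)
      rw [hst _ (show (t : ℕ) + 1 ≤ n by omega)]
      simp only [Nat.add_sub_cancel, Nat.add_one_ne_zero, if_false]
      push_cast
      omega
  · rw [if_neg ht]
    refine ⟨⟨p, by omega⟩, ?_⟩
    have := t.is_le
    have hfp : f p ≤ k := by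
      rcases hpn.lt_or_eq with h | rfl
      · exact (Nat.le_succ _).trans (hfk p le_rfl h)
      · omega
    have := hkf (p - 1)
    simp only [hst _ hpn]
    split_ifs <;> omega

theorem dotAct_alphaWt_eq_staircase {n i : ℕ} {f : ℕ → ℕ} {w : Equiv.Perm (Fin (n + 1))}
    (hf : Antitone f) (hfn : f n = 0) (hreg : RegularWt (alphaWt (n + 1) f i))
    (hdom : Dominant (dotAct w (alphaWt (n + 1) f i))) (j : Fin (n + 1)) :
    dotAct w (alphaWt (n + 1) f i) j = staircase (n + 1) f (i - inversions w) j := by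
  set b : Fin (n + 1) → ℤ := fun t => alphaWt (n + 1) f i t + rho (n + 1) t with hb
  have hb_lt : ∀ t : Fin (n + 1), (t : ℕ) < n → b t = f t + n + 1 - t := fun t ht => by
    simp only [hb, alphaWt, add_tsub_cancel_right, rho, Nat.cast_add, Nat.cast_one, ht,
      ↓reduceIte]
    ring
  have hb_last : b (Fin.last n) = i + 1 := by simp [hb, alphaWt, rho]
  have hne : ∀ t < n, f t + n ≠ i + t := fun t ht h => by
    have := congrArg Fin.val (hreg (a₁ := ⟨t, by omega⟩) (a₂ := Fin.last n)
      (by change b _ = b _; rw [hb_lt _ ht, hb_last]; push_cast; omega))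
    simp only [Fin.val_last] at this
    omega
  -- `p` is the position at which `b (last n) = i + 1` fits into the decreasing `b ∘ castSucc`
  obtain ⟨p, hpn, hp⟩ := Nat.exists_forall_lt_iff_le (P := fun t => f t + n < i + t)
    (fun t t' htt' h => by have := hf htt'; omega) n
  have hni : n ≤ i + p := by
    rcases hpn.lt_or_eq with h | rfl
    · have := (hp p h).2 le_rfl
      omega
    · omega
  have hkf : ∀ t < p, i + p - n ≤ f t := fun t ht => by
    have := (hp (p - 1) (by omega)).not.2 (by omega)
    have := hne (p - 1) (by omega)
    have := hf (show t ≤ p - 1 by omega)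
    omega
  have hfk : ∀ t, p ≤ t → t < n → f t + 1 ≤ i + p - n := fun t hpt ht => by
    have := (hp p (by omega)).2 le_rfl
    have := hf hpt
    omega
  have hsort : StrictAnti fun j => b (w.symm j) := hdom.strictAnti_add_rho
  have hinv : inversions w = n - p := by
    rw [inversions_eq_card_of_strictAnti hsort]
    refine card_ascents_of_insert (fun s t hst ht => ?_) (fun s hs => ?_) hpn
    · have hst' : (s : ℕ) < t := hst
      rw [hb_lt s (hst'.trans ht), hb_lt t ht]
      have := hf hst'.le
      omega
    · rw [hb_lt s hs, hb_last, ← hp s hs]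
      have := hne s hs
      omega
  have hc : StrictAnti fun s : Fin (n + 1) =>
      (staircase (n + 1) f (i + p - n) s : ℤ) + rho (n + 1) s :=
    Antitone.add_strictAnti (fun s t hst => Nat.cast_le.2 (hf.staircase _ _ hst))
      (rho_strictAnti _)
  have hsorted := hsort.eq_of_range_subset hc <| by
    rintro _ ⟨j, rfl⟩
    obtain ⟨s, hs⟩ := exists_staircase_add_rho_eq hf hfn hpn hkf hfk (w.symm j)
    rw [show i + p - n + n - p = i by omega] at hs
    exact ⟨s, hs.symm⟩
  have := dotAct_add_rho w (alphaWt (n + 1) f i) j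
  rw [hinv, show i - (n - p) = i + p - n by omega]
  linarith [congrFun hsorted j]

theorem sum_alphaWt (n i : ℕ) (f : ℕ → ℕ) :
    ∑ j, alphaWt (n + 1) f i j = ∑ t ∈ range n, (f t : ℤ) + i := by
  simp [Fin.sum_univ_castSucc, alphaWt, Fin.sum_univ_eq_sum_range (fun t => (f t : ℤ))]

theorem sum_sub_sum_eq_of_dotAct_eq {n i : ℕ} {f g : ℕ → ℕ} (hfn : f n = 0)
    {w : Equiv.Perm (Fin (n + 1))}
    (h : ∀ j : Fin (n + 1), dotAct w (alphaWt (n + 1) f i) j = g j) :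
    (∑ t ∈ range (n + 1), g t) - ∑ t ∈ range (n + 1), f t = i := by
  have hsum : ∑ t ∈ range (n + 1), (g t : ℤ) = ∑ t ∈ range (n + 1), (f t : ℤ) + i :=
    calc ∑ t ∈ range (n + 1), (g t : ℤ)
        = ∑ j, dotAct w (alphaWt (n + 1) f i) j := by
          simp only [h, Fin.sum_univ_eq_sum_range (fun t => (g t : ℤ))]
      _ = ∑ t ∈ range n, (f t : ℤ) + i := by rw [sum_dotAct, sum_alphaWt]
      _ = ∑ t ∈ range (n + 1), (f t : ℤ) + i := by simp [sum_range_succ, hfn]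
  have : ∑ t ∈ range (n + 1), g t = ∑ t ∈ range (n + 1), f t + i := by exact_mod_cast hsum
  omega

theorem stmt17_general (r : ℕ) (f : ℕ → ℕ) (hr : 0 < r)
    (hmono : ∀ i j, i ≤ j → f j ≤ f i)
    (hht : ∀ i, r - 1 ≤ i → f i = 0) :
    (∀ (i : ℕ) (w : Equiv.Perm (Fin r)),
        RegularWt (alphaWt r f i) → Dominant (dotAct w (alphaWt r f i)) →
        (∀ j : Fin r, dotAct w (alphaWt r f i) j =
            (staircase r f (i - inversions w) (j : ℕ) : ℤ)) ∧
          (∑ t ∈ Finset.range r, staircase r f (i - inversions w) t) -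
              (∑ t ∈ Finset.range r, f t) = i) ∧
      ∀ (i i' : ℕ) (w w' : Equiv.Perm (Fin r)),
        RegularWt (alphaWt r f i) → Dominant (dotAct w (alphaWt r f i)) →
        RegularWt (alphaWt r f i') → Dominant (dotAct w' (alphaWt r f i')) →
        i - inversions w = i' - inversions w' → i = i' := by
  obtain ⟨n, rfl⟩ : ∃ n, r = n + 1 := ⟨r - 1, by omega⟩
  have hfn : f n = 0 := hht n (by omega)
  have hstair : ∀ i w, RegularWt (alphaWt (n + 1) f i) →
      Dominant (dotAct w (alphaWt (n + 1) f i)) → ∀ j : Fin (n + 1),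
        dotAct w (alphaWt (n + 1) f i) j = staircase (n + 1) f (i - inversions w) j :=
    fun i w hreg hdom => dotAct_alphaWt_eq_staircase hmono hfn hreg hdom
  have hsum : ∀ i w, RegularWt (alphaWt (n + 1) f i) →
      Dominant (dotAct w (alphaWt (n + 1) f i)) →
      (∑ t ∈ range (n + 1), staircase (n + 1) f (i - inversions w) t) -
        ∑ t ∈ range (n + 1), f t = i :=
    fun i w hreg hdom => sum_sub_sum_eq_of_dotAct_eq hfn (hstair i w hreg hdom)
  refine ⟨fun i w hreg hdom => ⟨hstair i w hreg hdom, hsum i w hreg hdom⟩,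
    fun i i' w w' hreg hdom hreg' hdom' hl => ?_⟩
  rw [← hsum i w hreg hdom, ← hsum i' w' hreg' hdom', hl]

/-- For every `i` with `α(i) = (δ^1, …, δ^{r-1}, i)` regular, if `w` is the
(automatically unique) Weyl group element making `w • α(i)` dominant, and
`l(i)` is its length, then `w • α(i)` is the staircase diagram `δ_{i - l(i)}` and
`s_{i - l(i)} = i`.  In particular `i ↦ i - l(i)` is injective on regular
indices. -/
theorem stmt17 (d r : ℕ) (f : ℕ → ℕ) (hr : 0 < r) (hrd : r ≤ d)
    (hmono : ∀ i j, i ≤ j → f j ≤ f i)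
    (hht : ∀ i, r - 1 ≤ i → f i = 0)
    (hwidth : f 0 ≤ d - r + 1) :
    (∀ (i : ℕ) (w : Equiv.Perm (Fin r)),
        RegularWt (alphaWt r f i) → Dominant (dotAct w (alphaWt r f i)) →
        (∀ j : Fin r, dotAct w (alphaWt r f i) j =
            (staircase r f (i - inversions w) (j : ℕ) : ℤ)) ∧
          (∑ t ∈ Finset.range r, staircase r f (i - inversions w) t) -
              (∑ t ∈ Finset.range r, f t) = i) ∧
      ∀ (i i' : ℕ) (w w' : Equiv.Perm (Fin r)),
        RegularWt (alphaWt r f i) → Dominant (dotAct w (alphaWt r f i)) →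
        RegularWt (alphaWt r f i') → Dominant (dotAct w' (alphaWt r f i')) →
        i - inversions w = i' - inversions w' → i = i' :=
  stmt17_general r f hr hmono hht
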